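/- Let A be a real n×n matrix, B a real n×m matrix, Q symmetric positive semidefinite, R symmetric positive definite, and let P* be a symmetric positive semidefinite solution of the algebraic Riccati equation P* = Q + AᵀP*A − AᵀP*B(R + BᵀP*B)⁻¹BᵀP*A. Set Ā := A − B(R + BᵀP*B)⁻¹BᵀP*A. If P is symmetric with P ⪰ P*, then its Riccati update P⁺ := Q + AᵀPA − AᵀPB(R + BᵀPB)⁻¹BᵀPA satisfies P* ⪯ P⁺ ⪯ P* + Āᵀ(P − P*)Ā. In particular, the Riccati difference equation preserves the order P_t ⪰ P* at every step when initialized at a terminal matrix Q_N ⪰ P*. -/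

import Mathlib

/-! Completing the square: for any gain `K` the closed-loop cost
`f(K, P) = Q + KᵀRK + (A - BK)ᵀP(A - BK)` equals `P⁺ + (K - K_P)ᵀ(R + BᵀPB)(K - K_P)`,
where `K_P = (R + BᵀPB)⁻¹BᵀPA` (so `Ā = A - BK*` with `K* = K_{P*}`), and `f(K, ·)` is
affine with linear part `(A - BK)ᵀ(·)(A - BK)`.
Hence `P⁺ - P* = f(K_P, P) - f(K_P, P*) + f(K_P, P*) - f(K*, P*)` is a sum of two congruences of
positive semidefinite matrices, and `P* + Āᵀ(P - P*)Ā - P⁺ = f(K*, P) - f(K_P, P)` is one.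
Iterating the lower bound backwards in time gives the statement about the difference equation. -/

open Matrix Finset

/-- Spectral norm of a real matrix: the operator norm with respect to the
Euclidean norms on the domain and codomain. -/
noncomputable def specNorm {p q : ℕ} (M : Matrix (Fin p) (Fin q) ℝ) : ℝ :=
  ‖LinearMap.toContinuousLinearMap (Matrix.toEuclideanLin M)‖

/-- Spectral radius of a real square matrix: the largest modulus of a
(complex) eigenvalue. -/
noncomputable def specRad {p : ℕ} (M : Matrix (Fin p) (Fin p) ℝ) : ℝ :=
  sSup {r : ℝ | ∃ μ ∈ spectrum ℂ (M.map (algebraMap ℝ ℂ)), r = ‖μ‖}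

/-- Smallest (real) eigenvalue of a square matrix. -/
noncomputable def lambdaMin {p : ℕ} (S : Matrix (Fin p) (Fin p) ℝ) : ℝ :=
  sInf {r : ℝ | ∃ v : Fin p → ℝ, v ≠ 0 ∧ S.mulVec v = r • v}

/-- `W`-induced norm of `M`: `sup_{z ≠ 0} √((zᵀMᵀWMz)/(zᵀWz))`. -/
noncomputable def winducedNorm {p : ℕ} (W M : Matrix (Fin p) (Fin p) ℝ) : ℝ :=
  sSup {r : ℝ | ∃ z : Fin p → ℝ, z ≠ 0 ∧
    r = Real.sqrt ((z ⬝ᵥ (Mᵀ * W * M).mulVec z) / (z ⬝ᵥ W.mulVec z))}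

/-- `W`-relative bound of a symmetric matrix `X`: `sup_{z ≠ 0} (zᵀXz)/(zᵀWz)`. -/
noncomputable def wrelBound {p : ℕ} (W X : Matrix (Fin p) (Fin p) ℝ) : ℝ :=
  sSup {r : ℝ | ∃ z : Fin p → ℝ, z ≠ 0 ∧
    r = (z ⬝ᵥ X.mulVec z) / (z ⬝ᵥ W.mulVec z)}

/-- Frobenius norm of a real matrix. -/
noncomputable def frobNorm {p q : ℕ} (M : Matrix (Fin p) (Fin q) ℝ) : ℝ :=
  Real.sqrt (∑ i, ∑ j, (M i j) ^ 2)

theorem transpose_mul_mul_sub_sub_eq {ι κ α : Type*} [Fintype κ] [DecidableEq κ] [CommRing α]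
    {S : Matrix κ κ α} (hS : S.IsSymm) (hdet : IsUnit S.det) (K M : Matrix κ ι α) :
    Kᵀ * S * K - Kᵀ * M - Mᵀ * K
      = (K - S⁻¹ * M)ᵀ * S * (K - S⁻¹ * M) - Mᵀ * S⁻¹ * M := by
  have hinv : (S⁻¹)ᵀ = S⁻¹ := by rw [transpose_nonsing_inv, hS.eq]
  simp only [transpose_sub, transpose_mul, hinv, Matrix.sub_mul, Matrix.mul_sub, Matrix.mul_assoc,
    mul_nonsing_inv_cancel_left _ _ hdet, nonsing_inv_mul_cancel_left _ _ hdet]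
  abel

theorem Matrix.PosDef.isUnit_det {ι 𝕜 : Type*} [Fintype ι] [DecidableEq ι] [Field 𝕜]
    [PartialOrder 𝕜] [StarRing 𝕜] {S : Matrix ι ι 𝕜} (hS : S.PosDef) : IsUnit S.det :=
  (isUnit_iff_isUnit_det S).mp hS.isUnit

section TrivialStar

variable {ι κ 𝕜 : Type*} [CommRing 𝕜] [PartialOrder 𝕜] [StarRing 𝕜] [TrivialStar 𝕜]

theorem Matrix.PosSemidef.isSymm {X : Matrix ι ι 𝕜} (hX : X.PosSemidef) : X.IsSymm :=
  isHermitian_iff_isSymm.mp hX.isHermitian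

variable [Fintype ι] [Fintype κ]

theorem Matrix.PosSemidef.transpose_mul_mul_same {X : Matrix ι ι 𝕜} (hX : X.PosSemidef)
    (C : Matrix ι κ 𝕜) : (Cᵀ * X * C).PosSemidef := by
  simpa only [conjTranspose_eq_transpose_of_trivial] using hX.conjTranspose_mul_mul_same C

theorem Matrix.PosDef.add_transpose_mul_mul_same [AddLeftMono 𝕜] {R : Matrix κ κ 𝕜}
    (hR : R.PosDef) {P : Matrix ι ι 𝕜} (hP : P.PosSemidef) (B : Matrix ι κ 𝕜) :
    (R + Bᵀ * P * B).PosDef :=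
  hR.add_posSemidef (hP.transpose_mul_mul_same B)

end TrivialStar

section Riccati

variable {ι κ : Type*} [Fintype ι] [Fintype κ] [DecidableEq κ]
  (A : Matrix ι ι ℝ) (B : Matrix ι κ ℝ) (Q : Matrix ι ι ℝ) (R : Matrix κ κ ℝ)

noncomputable def riccatiUpdate (P : Matrix ι ι ℝ) : Matrix ι ι ℝ :=
  Q + Aᵀ * P * A - Aᵀ * P * B * (R + Bᵀ * P * B)⁻¹ * (Bᵀ * P * A)

noncomputable def riccatiGain (P : Matrix ι ι ℝ) : Matrix κ ι ℝ :=
  (R + Bᵀ * P * B)⁻¹ * (Bᵀ * P * A)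

def closedLoopCost (K : Matrix κ ι ℝ) (P : Matrix ι ι ℝ) : Matrix ι ι ℝ :=
  Q + Kᵀ * R * K + (A - B * K)ᵀ * P * (A - B * K)

omit [DecidableEq κ] in
theorem closedLoopCost_sub_closedLoopCost (K : Matrix κ ι ℝ) (P P' : Matrix ι ι ℝ) :
    closedLoopCost A B Q R K P - closedLoopCost A B Q R K P'
      = (A - B * K)ᵀ * (P - P') * (A - B * K) := by
  simp only [closedLoopCost, Matrix.mul_sub, Matrix.sub_mul]
  abel

variable {A B Q R}

theorem closedLoopCost_eq_riccatiUpdate_add {P : Matrix ι ι ℝ} (hP : P.IsSymm) (hR : R.IsSymm)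
    (hdet : IsUnit (R + Bᵀ * P * B).det) (K : Matrix κ ι ℝ) :
    closedLoopCost A B Q R K P = riccatiUpdate A B Q R P
      + (K - riccatiGain A B R P)ᵀ * (R + Bᵀ * P * B) * (K - riccatiGain A B R P) := by
  have hS : (R + Bᵀ * P * B).IsSymm := by
    simp only [IsSymm, transpose_add, transpose_mul, transpose_transpose, hP.eq, hR.eq,
      Matrix.mul_assoc]
  have hM : (Bᵀ * P * A)ᵀ = Aᵀ * P * B := by
    simp only [transpose_mul, transpose_transpose, hP.eq, Matrix.mul_assoc]
  have hexpand : closedLoopCost A B Q R K P = Q + Aᵀ * P * A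
      + (Kᵀ * (R + Bᵀ * P * B) * K - Kᵀ * (Bᵀ * P * A) - (Bᵀ * P * A)ᵀ * K) := by
    simp only [closedLoopCost, transpose_sub, transpose_mul, transpose_transpose, hP.eq,
      Matrix.mul_sub, Matrix.sub_mul, Matrix.mul_add, Matrix.add_mul, Matrix.mul_assoc]
    abel
  rw [hexpand, transpose_mul_mul_sub_sub_eq hS hdet, hM, riccatiUpdate, riccatiGain]
  abel

theorem closedLoopCost_riccatiGain {P : Matrix ι ι ℝ} (hP : P.IsSymm) (hR : R.IsSymm)
    (hdet : IsUnit (R + Bᵀ * P * B).det) :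
    closedLoopCost A B Q R (riccatiGain A B R P) P = riccatiUpdate A B Q R P := by
  simp [closedLoopCost_eq_riccatiUpdate_add hP hR hdet]

variable {Pstar P : Matrix ι ι ℝ}

theorem posSemidef_riccatiUpdate_sub (hR : R.PosDef) (hPstar : Pstar.PosSemidef)
    (hARE : riccatiUpdate A B Q R Pstar = Pstar) (hP : (P - Pstar).PosSemidef) :
    (riccatiUpdate A B Q R P - Pstar).PosSemidef := by
  have hP' : P.PosSemidef := by simpa using hPstar.add hP
  have hSstar := hR.add_transpose_mul_mul_same hPstar B
  have hS := hR.add_transpose_mul_mul_same hP' B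
  set K := riccatiGain A B R P
  set Kstar := riccatiGain A B R Pstar
  have hcost : closedLoopCost A B Q R K Pstar - Pstar
      = (K - Kstar)ᵀ * (R + Bᵀ * Pstar * B) * (K - Kstar) := by
    rw [closedLoopCost_eq_riccatiUpdate_add hPstar.isSymm hR.posSemidef.isSymm
      hSstar.isUnit_det, hARE, add_sub_cancel_left]
  have hsplit : riccatiUpdate A B Q R P - Pstar
      = (closedLoopCost A B Q R K P - closedLoopCost A B Q R K Pstar)
        + (closedLoopCost A B Q R K Pstar - Pstar) := by
    rw [closedLoopCost_riccatiGain hP'.isSymm hR.posSemidef.isSymm hS.isUnit_det]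
    abel
  rw [hsplit, closedLoopCost_sub_closedLoopCost, hcost]
  exact (hP.transpose_mul_mul_same _).add (hSstar.posSemidef.transpose_mul_mul_same _)

theorem posSemidef_sub_riccatiUpdate (hR : R.PosDef) (hPstar : Pstar.PosSemidef)
    (hARE : riccatiUpdate A B Q R Pstar = Pstar) (hP : (P - Pstar).PosSemidef) :
    (Pstar + (A - B * riccatiGain A B R Pstar)ᵀ * (P - Pstar) * (A - B * riccatiGain A B R Pstar)
      - riccatiUpdate A B Q R P).PosSemidef := by
  have hP' : P.PosSemidef := by simpa using hPstar.add hP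
  have hSstar := hR.add_transpose_mul_mul_same hPstar B
  have hS := hR.add_transpose_mul_mul_same hP' B
  set Kstar := riccatiGain A B R Pstar
  have hfixed : closedLoopCost A B Q R Kstar Pstar = Pstar := by
    rw [closedLoopCost_riccatiGain hPstar.isSymm hR.posSemidef.isSymm
      hSstar.isUnit_det, hARE]
  have hsplit : Pstar + (A - B * Kstar)ᵀ * (P - Pstar) * (A - B * Kstar) - riccatiUpdate A B Q R P
      = closedLoopCost A B Q R Kstar P - riccatiUpdate A B Q R P := by
    rw [← closedLoopCost_sub_closedLoopCost, hfixed]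
    abel
  rw [hsplit, closedLoopCost_eq_riccatiUpdate_add hP'.isSymm hR.posSemidef.isSymm
    hS.isUnit_det, add_sub_cancel_left]
  exact hS.posSemidef.transpose_mul_mul_same _

end Riccati

theorem riccati_update_order_preserving_general {n m : ℕ}
    (A : Matrix (Fin n) (Fin n) ℝ) (B : Matrix (Fin n) (Fin m) ℝ)
    (Q Pstar P : Matrix (Fin n) (Fin n) ℝ) (R : Matrix (Fin m) (Fin m) ℝ)
    (hR : R.PosDef) (hPstar : Pstar.PosSemidef)
    (hARE : Pstar = Q + Aᵀ * Pstar * A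
      - Aᵀ * Pstar * B * (R + Bᵀ * Pstar * B)⁻¹ * (Bᵀ * Pstar * A))
    (hPge : (P - Pstar).PosSemidef) :
    letI Abar := A - B * (R + Bᵀ * Pstar * B)⁻¹ * (Bᵀ * Pstar * A)
    letI Pplus := Q + Aᵀ * P * A - Aᵀ * P * B * (R + Bᵀ * P * B)⁻¹ * (Bᵀ * P * A)
    (Pplus - Pstar).PosSemidef ∧
    (Pstar + Abarᵀ * (P - Pstar) * Abar - Pplus).PosSemidef ∧
    (∀ (N : ℕ) (QN : Matrix (Fin n) (Fin n) ℝ), QN.IsSymm → (QN - Pstar).PosSemidef →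
      ∀ Pseq : ℕ → Matrix (Fin n) (Fin n) ℝ, Pseq N = QN →
        (∀ t, t < N → Pseq t = Q + Aᵀ * Pseq (t + 1) * A
          - Aᵀ * Pseq (t + 1) * B * (R + Bᵀ * Pseq (t + 1) * B)⁻¹
            * (Bᵀ * Pseq (t + 1) * A)) →
        ∀ t ≤ N, (Pseq t - Pstar).PosSemidef) := by
  have hfixed : riccatiUpdate A B Q R Pstar = Pstar := hARE.symm
  have hAbar : A - B * (R + Bᵀ * Pstar * B)⁻¹ * (Bᵀ * Pstar * A)
      = A - B * riccatiGain A B R Pstar := by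
    simp only [riccatiGain, Matrix.mul_assoc]
  refine ⟨posSemidef_riccatiUpdate_sub hR hPstar hfixed hPge,
    hAbar ▸ posSemidef_sub_riccatiUpdate hR hPstar hfixed hPge, ?_⟩
  intro N QN _ hQN Pseq hN hrec t ht
  induction ht using Nat.decreasingInduction with
  | self => rwa [hN]
  | of_succ k hk ih => rw [hrec k hk]; exact posSemidef_riccatiUpdate_sub hR hPstar hfixed ih

/-- Monotonicity of the Riccati update above the ARE solution:
if `P ⪰ P*` then `P* ⪯ P⁺ ⪯ P* + Āᵀ(P - P*)Ā`; in particular the Riccati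
difference equation initialized at `Q_N ⪰ P*` satisfies `P_t ⪰ P*` at every step. -/
theorem riccati_update_order_preserving {n m : ℕ}
    (A : Matrix (Fin n) (Fin n) ℝ) (B : Matrix (Fin n) (Fin m) ℝ)
    (Q Pstar P : Matrix (Fin n) (Fin n) ℝ) (R : Matrix (Fin m) (Fin m) ℝ)
    (hQ : Q.PosSemidef) (hR : R.PosDef) (hPstar : Pstar.PosSemidef)
    (hARE : Pstar = Q + Aᵀ * Pstar * A
      - Aᵀ * Pstar * B * (R + Bᵀ * Pstar * B)⁻¹ * (Bᵀ * Pstar * A))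
    (hPsym : P.IsSymm) (hPge : (P - Pstar).PosSemidef) :
    letI Abar := A - B * (R + Bᵀ * Pstar * B)⁻¹ * (Bᵀ * Pstar * A)
    letI Pplus := Q + Aᵀ * P * A - Aᵀ * P * B * (R + Bᵀ * P * B)⁻¹ * (Bᵀ * P * A)
    (Pplus - Pstar).PosSemidef ∧
    (Pstar + Abarᵀ * (P - Pstar) * Abar - Pplus).PosSemidef ∧
    (∀ (N : ℕ) (QN : Matrix (Fin n) (Fin n) ℝ), QN.IsSymm → (QN - Pstar).PosSemidef →
      ∀ Pseq : ℕ → Matrix (Fin n) (Fin n) ℝ, Pseq N = QN →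
        (∀ t, t < N → Pseq t = Q + Aᵀ * Pseq (t + 1) * A
          - Aᵀ * Pseq (t + 1) * B * (R + Bᵀ * Pseq (t + 1) * B)⁻¹
            * (Bᵀ * Pseq (t + 1) * A)) →
        ∀ t ≤ N, (Pseq t - Pstar).PosSemidef) :=
  riccati_update_order_preserving_general A B Q Pstar P R hR hPstar hARE hPge
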